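/- arXiv:1306.1155 — 3 statements merged into one kernel-verified Lean document; each statement's English description precedes it below -/
import Mathlib

section
/- Let X be a closed subspace of c₀ and let Y be a strictly convex Banach space. Then every norm-attaining bounded linear operator T : X → Y has finite rank. -/
open scoped ZeroAtInfty
open Filter Topology

/-! Let `T` attain its norm at `x`. Since `ι x ∈ c₀`, its coordinates are below `1 / 2` from some
index `N` on, so `‖x ± v‖ ≤ 1` for every `v` of norm at most `1 / 2` whose first `N` coordinates
vanish. Then `(T x ± T v) / ‖T‖` both lie in the unit ball around the unit vector `T x / ‖T‖`, and
strict convexity forces `T v = 0`. Hence `ker T` contains a subspace of codimension at most `N`. -/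

theorem ContinuousLinearMap.apply_eq_zero_of_norm_add_le_of_norm_sub_le
    {X Y : Type*} [SeminormedAddCommGroup X] [NormedSpace ℝ X]
    [NormedAddCommGroup Y] [NormedSpace ℝ Y]
    (hY : ∀ y z : Y, ‖y‖ = 1 → ‖y + z‖ ≤ 1 → ‖y - z‖ ≤ 1 → z = 0)
    (T : X →L[ℝ] Y) {x w : X} (hxT : ‖T x‖ = ‖T‖)
    (hplus : ‖x + w‖ ≤ 1) (hminus : ‖x - w‖ ≤ 1) : T w = 0 := by
  rcases (norm_nonneg T).eq_or_lt with hT | hT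
  · simpa [← hT] using T.le_opNorm w
  have hnormalize : ∀ u, ‖‖T‖⁻¹ • T u‖ ≤ ‖u‖ := fun u => by
    rw [norm_smul, norm_inv, norm_norm, inv_mul_le_iff₀ hT]
    exact T.le_opNorm u
  have hy : ‖‖T‖⁻¹ • T x‖ = 1 := by
    rw [norm_smul, norm_inv, norm_norm, hxT, inv_mul_cancel₀ hT.ne']
  have hz := hY _ (‖T‖⁻¹ • T w) hy
    (by simpa only [← smul_add, ← map_add] using (hnormalize _).trans hplus)
    (by simpa only [← smul_sub, ← map_sub] using (hnormalize _).trans hminus)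
  exact (smul_eq_zero.mp hz).resolve_left (inv_ne_zero hT.ne')

theorem ZeroAtInftyContinuousMap.exists_norm_add_le_one {E : Type*} [SeminormedAddCommGroup E]
    {f : C₀(ℕ, E)} (hf : ‖f‖ ≤ 1) :
    ∃ N : ℕ, ∀ g : C₀(ℕ, E), (∀ n < N, g n = 0) → ‖g‖ ≤ 1 / 2 → ‖f + g‖ ≤ 1 := by
  have hf0 : Tendsto f atTop (𝓝 0) := cocompact_eq_atTop (α := ℕ) ▸ zero_at_infty f
  obtain ⟨N, hN⟩ := eventually_atTop.mp
    (NormedAddGroup.tendsto_nhds_zero.mp hf0 (1 / 2) one_half_pos)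
  refine ⟨N, fun g hg hg2 => ?_⟩
  rw [← norm_toBCF_eq_norm]
  refine (BoundedContinuousFunction.norm_le zero_le_one).mpr fun n => ?_
  have hfn : ‖f n‖ ≤ ‖f‖ := f.toBCF.norm_coe_le_norm n
  have hgn : ‖g n‖ ≤ ‖g‖ := g.toBCF.norm_coe_le_norm n
  change ‖f n + g n‖ ≤ 1
  rcases lt_or_ge n N with hn | hn
  · rw [hg n hn, add_zero]
    exact hfn.trans hf
  · calc ‖f n + g n‖ ≤ ‖f n‖ + ‖g n‖ := norm_add_le _ _
      _ ≤ 1 / 2 + 1 / 2 := add_le_add (hN n hn).le (hgn.trans hg2)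
      _ = 1 := by norm_num

theorem LinearMap.finiteDimensional_range_of_ker_le {K M V W : Type*} [Field K]
    [AddCommGroup M] [Module K M] [AddCommGroup V] [Module K V] [AddCommGroup W] [Module K W]
    [FiniteDimensional K V] (φ : M →ₗ[K] V) (T : M →ₗ[K] W) (h : ker φ ≤ ker T) :
    FiniteDimensional K (range T) := by
  have : FiniteDimensional K (M ⧸ ker φ) := φ.quotKerEquivRange.symm.finiteDimensional
  rw [← (ker φ).range_liftQ T h]
  infer_instance

theorem ContinuousLinearMap.exists_forall_apply_eq_zero_of_norm_attained
    {X Y : Type*} [SeminormedAddCommGroup X] [NormedSpace ℝ X]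
    [NormedAddCommGroup Y] [NormedSpace ℝ Y]
    (hY : ∀ y z : Y, ‖y‖ = 1 → ‖y + z‖ ≤ 1 → ‖y - z‖ ≤ 1 → z = 0)
    (ι : X →ₗᵢ[ℝ] C₀(ℕ, ℝ)) (T : X →L[ℝ] Y) {x : X} (hx : ‖x‖ ≤ 1) (hxT : ‖T x‖ = ‖T‖) :
    ∃ N : ℕ, ∀ v : X, (∀ n < N, ι v n = 0) → T v = 0 := by
  obtain ⟨N, hN⟩ := ZeroAtInftyContinuousMap.exists_norm_add_le_one (f := ι x) (by rwa [ι.norm_map])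
  refine ⟨N, fun v hv => ?_⟩
  set c : ℝ := (2 * ‖v‖ + 1)⁻¹
  have hc : 0 < c := by positivity
  have hcv : ‖ι (c • v)‖ ≤ 1 / 2 := by
    rw [ι.norm_map, norm_smul, Real.norm_of_nonneg hc.le, inv_mul_le_iff₀ (by positivity)]
    linarith [norm_nonneg v]
  have hcv0 : ∀ n < N, ι (c • v) n = 0 := fun n hn => by simp [hv n hn]
  have hplus : ‖x + c • v‖ ≤ 1 := by
    simpa only [← ι.norm_map, map_add] using hN _ hcv0 hcv
  have hminus : ‖x - c • v‖ ≤ 1 := by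
    have hcv0' : ∀ n < N, (-ι (c • v)) n = 0 := fun n hn => by
      rw [ZeroAtInftyContinuousMap.neg_apply, hcv0 n hn, neg_zero]
    simpa only [← ι.norm_map, map_sub, ← sub_eq_add_neg] using
      hN _ hcv0' (by rwa [norm_neg])
  have hTcv := T.apply_eq_zero_of_norm_add_le_of_norm_sub_le hY hxT hplus hminus
  rw [map_smul] at hTcv
  exact (smul_eq_zero.mp hTcv).resolve_left hc.ne'

theorem stmt_0_general
    (X : Type*) [NormedAddCommGroup X] [NormedSpace ℝ X]
    (ι : X →ₗᵢ[ℝ] C₀(ℕ, ℝ))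
    (Y : Type*) [NormedAddCommGroup Y] [NormedSpace ℝ Y]
    (hY : ∀ y z : Y, ‖y‖ = 1 → ‖y + z‖ ≤ 1 → ‖y - z‖ ≤ 1 → z = 0)
    (T : X →L[ℝ] Y)
    (hT : ∃ x : X, ‖x‖ = 1 ∧ ‖T x‖ = ‖T‖) :
    FiniteDimensional ℝ (LinearMap.range (T : X →ₗ[ℝ] Y)) := by
  obtain ⟨x, hx, hxT⟩ := hT
  obtain ⟨N, hN⟩ := T.exists_forall_apply_eq_zero_of_norm_attained hY ι hx.le hxT
  let firstCoords : X →ₗ[ℝ] (Fin N → ℝ) :=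
    { toFun := fun v i => ι v i
      map_add' := fun _ _ => by ext; simp
      map_smul' := fun _ _ => by ext; simp }
  refine firstCoords.finiteDimensional_range_of_ker_le _ fun v hv => ?_
  exact hN v fun n hn => congrFun hv ⟨n, hn⟩

/-- If `X` is a closed subspace of `c₀` (encoded as a Banach space that embeds
linearly isometrically into `c₀`, hence with closed range) and `Y` is a strictly convex Banach
space, then every norm-attaining bounded linear operator `T : X → Y` has finite rank. -/
theorem stmt_0
    (X : Type*) [NormedAddCommGroup X] [NormedSpace ℝ X] [CompleteSpace X]
    (ι : X →ₗᵢ[ℝ] C₀(ℕ, ℝ)) (hclosed : IsClosed (Set.range ι))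
    (Y : Type*) [NormedAddCommGroup Y] [NormedSpace ℝ Y] [CompleteSpace Y]
    (hY : ∀ y z : Y, ‖y‖ = 1 → ‖y + z‖ ≤ 1 → ‖y - z‖ ≤ 1 → z = 0)
    (T : X →L[ℝ] Y)
    (hT : ∃ x : X, ‖x‖ = 1 ∧ ‖T x‖ = ‖T‖) :
    FiniteDimensional ℝ (LinearMap.range (T : X →ₗ[ℝ] Y)) :=
  stmt_0_general X ι Y hY T hT
end

section
/- Let X and Y be Banach spaces, Z = X ⊕∞ Y, T₀ : X → Y a bounded linear operator with ‖T₀‖ = 1, S₀ : Z → Z defined by S₀(x,y) = (0, T₀ x), and let 0 < ε < 1/2. If there exists a norm-attaining bounded linear operator S : Z → Z with ‖S₀ − S‖ < ε, then there exists a norm-attaining bounded linear operator T : X → Y with ‖T₀ − T‖ < ε. -/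
/-!
`S₀` vanishes on `{0} × Y` and has zero first component, and `‖S‖ > ‖S₀‖ - ε ≥ 1 - ε > ε`.
Hence at a unit vector `(x₀, y₀)` where `S` attains its norm, `‖S (0, y₀)‖ < ε < ‖S‖` and
`‖(S (x₀, y₀)).1‖ < ε < ‖S‖`. The first forces `‖x₀‖ = 1`: otherwise `(x₀, y₀)` is a proper
convex combination of `(0, y₀)` and a vector of norm at most one, and `S` could not reach its
norm there. With a norming functional `g` at `x₀`, the compression `T x = (S (x, g x • y₀)).2`
has norm `‖S‖`, attained at `x₀`, and `T₀ - T` is the same compression of `S₀ - S`, so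
`‖T₀ - T‖ ≤ ‖S₀ - S‖ < ε`.
-/

section

variable {X Y F : Type*} [NormedAddCommGroup X] [NormedSpace ℝ X]
  [NormedAddCommGroup Y] [NormedSpace ℝ Y] [NormedAddCommGroup F] [NormedSpace ℝ F]

theorem norm_fst_eq_one_of_norm_apply_eq_opNorm {S : X × Y →L[ℝ] F} {x : X} {y : Y}
    (hxy : ‖(x, y)‖ = 1) (hSxy : ‖S (x, y)‖ = ‖S‖) (hSy : ‖S (0, y)‖ < ‖S‖) : ‖x‖ = 1 := by
  by_contra hne
  have hlt : ‖x‖ < 1 := (hxy ▸ norm_fst_le (x, y)).lt_of_ne hne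
  set v : X × Y := (‖x‖⁻¹ • x, y)
  have hv : ‖v‖ ≤ 1 := by
    refine max_le ?_ (hxy ▸ norm_snd_le (x, y))
    rw [norm_smul, norm_inv, norm_norm]
    exact inv_mul_le_one_of_le₀ le_rfl (norm_nonneg _)
  have hsegment : S (x, y) = ‖x‖ • S v + (1 - ‖x‖) • S (0, y) := by
    rw [← map_smul, ← map_smul, ← map_add]
    congr 1
    rcases eq_or_ne x 0 with rfl | hx
    · simp [v]
    · ext
      · simp [v, smul_inv_smul₀ (norm_ne_zero_iff.2 hx)]
      · simp [v, ← add_smul]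
  have : ‖S (x, y)‖ < ‖S‖ :=
    calc ‖S (x, y)‖ ≤ ‖x‖ * ‖S v‖ + (1 - ‖x‖) * ‖S (0, y)‖ := by
          refine hsegment ▸ (norm_add_le _ _).trans_eq ?_
          rw [norm_smul, norm_smul, norm_norm, Real.norm_of_nonneg (sub_nonneg.2 hlt.le)]
      _ < ‖x‖ * ‖S‖ + (1 - ‖x‖) * ‖S‖ :=
          add_lt_add_of_le_of_lt
            (mul_le_mul_of_nonneg_left (by simpa using S.le_opNorm_of_le hv) (norm_nonneg x))
            (mul_lt_mul_of_pos_left hSy (sub_pos.2 hlt))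
      _ = ‖S‖ := by ring
  exact this.ne hSxy

theorem norm_snd_apply_eq_opNorm {S : X →L[ℝ] Y × F} {u : X} (hSu : ‖S u‖ = ‖S‖)
    (hfst : ‖(S u).1‖ < ‖S‖) : ‖(S u).2‖ = ‖S‖ := by
  rw [Prod.norm_def, max_eq_iff] at hSu
  exact (hSu.resolve_left fun h ↦ hfst.ne h.1).1

variable {G : Type*} [NormedAddCommGroup G] [NormedSpace ℝ G]

def graphCompression (S : X × Y →L[ℝ] F × G) (K : X →L[ℝ] Y) : X →L[ℝ] G :=
  ContinuousLinearMap.snd ℝ F G ∘L S ∘L (ContinuousLinearMap.id ℝ X).prod K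

@[simp]
theorem graphCompression_apply (S : X × Y →L[ℝ] F × G) (K : X →L[ℝ] Y) (x : X) :
    graphCompression S K x = (S (x, K x)).2 :=
  rfl

theorem graphCompression_sub (S₁ S₂ : X × Y →L[ℝ] F × G) (K : X →L[ℝ] Y) :
    graphCompression (S₁ - S₂) K = graphCompression S₁ K - graphCompression S₂ K := by
  ext x
  simp

theorem opNorm_graphCompression_le (S : X × Y →L[ℝ] F × G) {K : X →L[ℝ] Y} (hK : ‖K‖ ≤ 1) :
    ‖graphCompression S K‖ ≤ ‖S‖ := by
  refine ContinuousLinearMap.opNorm_le_bound _ (norm_nonneg S) fun x ↦ ?_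
  calc ‖graphCompression S K x‖ ≤ ‖S (x, K x)‖ := norm_snd_le _
    _ ≤ ‖S‖ * ‖(x, K x)‖ := S.le_opNorm _
    _ ≤ ‖S‖ * ‖x‖ := by
        gcongr
        exact max_le le_rfl (K.le_of_opNorm_le hK x |>.trans_eq (one_mul _))

/-- Hahn–Banach: a norming functional `g` at `x₀` makes `K = g ⊗ y₀` map `x₀` to `y₀`. -/
theorem exists_graphCompression_norm_apply_eq_opNorm {S : X × Y →L[ℝ] F × G} {x₀ : X} {y₀ : Y}
    (hx₀ : ‖x₀‖ = 1) (hy₀ : ‖y₀‖ ≤ 1) (hS : ‖(S (x₀, y₀)).2‖ = ‖S‖) :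
    ∃ K : X →L[ℝ] Y, ‖K‖ ≤ 1 ∧ ‖graphCompression S K x₀‖ = ‖graphCompression S K‖ := by
  obtain ⟨g, hg, hgx₀⟩ := exists_dual_vector ℝ x₀ (by simp [hx₀])
  have hK : ‖g.smulRight y₀‖ ≤ 1 := by
    rwa [ContinuousLinearMap.norm_smulRight_apply, hg, one_mul]
  refine ⟨g.smulRight y₀, hK, le_antisymm ?_ ?_⟩
  · simpa [hx₀] using (graphCompression S (g.smulRight y₀)).le_opNorm x₀
  · simpa [hgx₀, hx₀, hS] using opNorm_graphCompression_le S hK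

end

theorem stmt_5_general
    (X : Type*) [NormedAddCommGroup X] [NormedSpace ℝ X]
    (Y : Type*) [NormedAddCommGroup Y] [NormedSpace ℝ Y]
    (T₀ : X →L[ℝ] Y) (hT₀ : ‖T₀‖ = 1)
    (S₀ : X × Y →L[ℝ] X × Y) (hS₀ : ∀ x : X, ∀ y : Y, S₀ (x, y) = (0, T₀ x))
    (ε : ℝ) (hε₁ : ε < 1 / 2)
    (S : X × Y →L[ℝ] X × Y) (hSna : ∃ u : X × Y, ‖u‖ = 1 ∧ ‖S u‖ = ‖S‖)
    (hSS₀ : ‖S₀ - S‖ < ε) :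
    ∃ T : X →L[ℝ] Y, (∃ x : X, ‖x‖ = 1 ∧ ‖T x‖ = ‖T‖) ∧ ‖T₀ - T‖ < ε := by
  obtain ⟨⟨x₀, y₀⟩, hu, hSu⟩ := hSna
  have hy₀ : ‖y₀‖ ≤ 1 := (le_max_right _ _).trans_eq hu
  have hS₀_graph (K : X →L[ℝ] Y) : graphCompression S₀ K = T₀ := by
    ext x
    simp [hS₀]
  have hS_near (w : X × Y) (hw : ‖w‖ ≤ 1) : ‖S₀ w - S w‖ < ε :=
    ((S₀ - S).le_opNorm_of_le hw).trans_lt (by simpa using hSS₀)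
  have hεS : ε < ‖S‖ := by
    have hT₀S₀ : ‖T₀‖ ≤ ‖S₀‖ := hS₀_graph 0 ▸ opNorm_graphCompression_le S₀ (by simp)
    linarith [norm_sub_norm_le S₀ S]
  have hSu₂ : ‖(S (x₀, y₀)).2‖ = ‖S‖ := by
    refine norm_snd_apply_eq_opNorm hSu ?_
    have hfst := (norm_fst_le _).trans_lt (hS_near (x₀, y₀) hu.le)
    simp only [hS₀, Prod.fst_sub, zero_sub, norm_neg] at hfst
    linarith
  have hx₀ : ‖x₀‖ = 1 := by
    refine norm_fst_eq_one_of_norm_apply_eq_opNorm hu hSu ?_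
    have hS₀y₀ : S₀ (0, y₀) = 0 := by rw [hS₀, map_zero, Prod.mk_zero_zero]
    simpa [hS₀y₀] using (hS_near (0, y₀) (by simpa [Prod.norm_def] using hy₀)).trans hεS
  obtain ⟨K, hK, hSK⟩ := exists_graphCompression_norm_apply_eq_opNorm hx₀ hy₀ hSu₂
  refine ⟨graphCompression S K, ⟨x₀, hx₀, hSK⟩, ?_⟩
  calc ‖T₀ - graphCompression S K‖ = ‖graphCompression (S₀ - S) K‖ := by
        rw [graphCompression_sub, hS₀_graph]
    _ ≤ ‖S₀ - S‖ := opNorm_graphCompression_le _ hK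
    _ < ε := hSS₀

/-- With `Z = X ⊕∞ Y`, `‖T₀‖ = 1`, `S₀ (x, y) = (0, T₀ x)` and `0 < ε < 1/2`:
if a norm-attaining operator `S : Z → Z` satisfies `‖S₀ - S‖ < ε`, then there is a
norm-attaining operator `T : X → Y` with `‖T₀ - T‖ < ε`. -/
theorem stmt_5
    (X : Type*) [NormedAddCommGroup X] [NormedSpace ℝ X] [CompleteSpace X]
    (Y : Type*) [NormedAddCommGroup Y] [NormedSpace ℝ Y] [CompleteSpace Y]
    (T₀ : X →L[ℝ] Y) (hT₀ : ‖T₀‖ = 1)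
    (S₀ : X × Y →L[ℝ] X × Y) (hS₀ : ∀ x : X, ∀ y : Y, S₀ (x, y) = (0, T₀ x))
    (ε : ℝ) (hε₀ : 0 < ε) (hε₁ : ε < 1 / 2)
    (S : X × Y →L[ℝ] X × Y) (hSna : ∃ u : X × Y, ‖u‖ = 1 ∧ ‖S u‖ = ‖S‖)
    (hSS₀ : ‖S₀ - S‖ < ε) :
    ∃ T : X →L[ℝ] Y, (∃ x : X, ‖x‖ = 1 ∧ ‖T x‖ = ‖T‖) ∧ ‖T₀ - T‖ < ε :=
  stmt_5_general X Y T₀ hT₀ S₀ hS₀ ε hε₁ S hSna hSS₀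
end

section
/- Let X and Y be Banach spaces and suppose there is a compact operator T₀ : X → Y with ‖T₀‖ = 1 that cannot be approximated in operator norm by norm-attaining operators. Then with Z = X ⊕∞ Y, the compact operator S₀ : Z → Z given by S₀(x,y) = (0, T₀ x) cannot be approximated in operator norm by norm-attaining operators. -/
/-!
If `S` attains its norm at `u = (x, y)` and is close to `S₀ = (x, y) ↦ (0, T₀ x)`, then the first
coordinate of `S u` is small, so `‖(S u).2‖ = ‖S‖`, and `S (0, y)` is small, so `‖x‖` is close
to `1`. A Hahn–Banach functional norming `x` gives a section `L` of the first projection with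
`L x = u` and `‖L‖ ≤ 1 / ‖x‖`. Then `snd ∘ S ∘ L` attains its norm at `x / ‖x‖`, and it lies within
`‖S₀ - S‖ / ‖x‖` of `snd ∘ S₀ ∘ L = T₀`.
-/

open ContinuousLinearMap

theorem mem_closure_of_forall_dist_le {α β : Type*} [PseudoMetricSpace α] [PseudoMetricSpace β]
    {A : Set α} {B : Set β} {a : α} {b : β} {r C : ℝ} (hr : 0 < r)
    (h : ∀ a' ∈ A, dist a a' ≤ r → ∃ b' ∈ B, dist b b' ≤ C * dist a a') (ha : a ∈ closure A) :
    b ∈ closure B := by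
  rw [Metric.mem_closure_iff] at ha ⊢
  intro δ hδ
  have hC : 0 < max C 1 := one_pos.trans_le (le_max_right _ _)
  obtain ⟨a', ha', haa'⟩ := ha (min r (δ / max C 1)) (by positivity)
  obtain ⟨b', hb', hbb'⟩ := h a' ha' (haa'.le.trans (min_le_left _ _))
  refine ⟨b', hb', hbb'.trans_lt ?_⟩
  calc C * dist a a' ≤ max C 1 * dist a a' := by gcongr; exact le_max_left _ _
    _ < max C 1 * (δ / max C 1) := by gcongr; exact haa'.trans_le (min_le_right _ _)
    _ = δ := mul_div_cancel₀ _ hC.ne'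

section NormAttaining

variable {𝕜 E F : Type*} [RCLike 𝕜] [NormedAddCommGroup E] [NormedSpace 𝕜 E]
  [NormedAddCommGroup F] [NormedSpace 𝕜 F]

def NormAttaining (T : E →L[𝕜] F) : Prop :=
  ∃ x : E, ‖x‖ = 1 ∧ ‖T x‖ = ‖T‖

theorem NormAttaining.of_opNorm_mul_le {T : E →L[𝕜] F} {x : E} (hx : x ≠ 0)
    (h : ‖T‖ * ‖x‖ ≤ ‖T x‖) : NormAttaining T := by
  have hx₀ : 0 < ‖x‖ := norm_pos_iff.2 hx
  have hunit : ‖(‖x‖⁻¹ : 𝕜) • x‖ = 1 := by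
    rw [norm_smul, norm_inv, RCLike.norm_ofReal, abs_norm, inv_mul_cancel₀ hx₀.ne']
  refine ⟨_, hunit, le_antisymm ?_ ?_⟩
  · simpa [hunit] using T.le_opNorm ((‖x‖⁻¹ : 𝕜) • x)
  · rw [map_smul, norm_smul, norm_inv, RCLike.norm_ofReal, abs_norm, le_inv_mul_iff₀ hx₀]
    linarith

end NormAttaining

section Prod

variable {𝕜 X Y E : Type*} [RCLike 𝕜] [NormedAddCommGroup X] [NormedSpace 𝕜 X]
  [NormedAddCommGroup Y] [NormedSpace 𝕜 Y] [NormedAddCommGroup E] [NormedSpace 𝕜 E]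

variable (𝕜) in
theorem exists_section_fst_apply_eq {x : X} (hx : x ≠ 0) (y : Y) :
    ∃ L : X →L[𝕜] X × Y, (∀ x', (L x').1 = x') ∧ L x = (x, y) ∧ ‖L‖ * ‖x‖ ≤ ‖(x, y)‖ := by
  have hx₀ : 0 < ‖x‖ := norm_pos_iff.2 hx
  obtain ⟨f, hf, hfx⟩ := exists_dual_vector 𝕜 x hx₀.ne'
  refine ⟨(ContinuousLinearMap.id 𝕜 X).prod (((‖x‖⁻¹ : 𝕜) • f).smulRight y), fun _ ↦ rfl, ?_, ?_⟩
  · simp [hfx, hx₀.ne']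
  · rw [opNorm_prod, Prod.norm_mk, Prod.norm_mk, max_mul_of_nonneg _ _ hx₀.le]
    refine max_le_max (mul_le_of_le_one_left hx₀.le norm_id_le) (le_of_eq ?_)
    rw [norm_smulRight_apply, norm_smul, hf, norm_inv, RCLike.norm_ofReal, abs_norm]
    field_simp

theorem norm_apply_le_opNorm_mul_norm_fst_add (S : X × Y →L[𝕜] E) (u : X × Y) :
    ‖S u‖ ≤ ‖S‖ * ‖u.1‖ + ‖S (0, u.2)‖ := by
  calc ‖S u‖ = ‖S (u.1, 0) + S (0, u.2)‖ := by rw [← map_add, Prod.mk_add_mk, add_zero, zero_add]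
    _ ≤ ‖S (u.1, 0)‖ + ‖S (0, u.2)‖ := norm_add_le _ _
    _ ≤ ‖S‖ * ‖u.1‖ + ‖S (0, u.2)‖ := by
      gcongr
      simpa using S.le_opNorm (u.1, 0)

theorem norm_snd_comp_comp_le (A : E →L[𝕜] X × Y) (L : X →L[𝕜] E) :
    ‖(snd 𝕜 X Y).comp (A.comp L)‖ ≤ ‖A‖ * ‖L‖ :=
  calc _ ≤ ‖snd 𝕜 X Y‖ * (‖A‖ * ‖L‖) :=
        (opNorm_comp_le _ _).trans (by gcongr; exact opNorm_comp_le _ _)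
    _ ≤ ‖A‖ * ‖L‖ := mul_le_of_le_one_left (by positivity) (norm_snd_le 𝕜 X Y)

end Prod

section BlockLowerLeft

variable {𝕜 X Y : Type*} [RCLike 𝕜] [NormedAddCommGroup X] [NormedSpace 𝕜 X]
  [NormedAddCommGroup Y] [NormedSpace 𝕜 Y]

def blockLowerLeft (T : X →L[𝕜] Y) : X × Y →L[𝕜] X × Y :=
  (inr 𝕜 X Y).comp (T.comp (fst 𝕜 X Y))

@[simp]
theorem blockLowerLeft_apply (T : X →L[𝕜] Y) (u : X × Y) : blockLowerLeft T u = (0, T u.1) :=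
  rfl

theorem norm_blockLowerLeft (T : X →L[𝕜] Y) : ‖blockLowerLeft T‖ = ‖T‖ := by
  refine le_antisymm (opNorm_le_bound _ (norm_nonneg _) fun u ↦ ?_)
    (opNorm_le_bound _ (norm_nonneg _) fun x ↦ ?_)
  · simpa using (T.le_opNorm u.1).trans (by gcongr; exact _root_.norm_fst_le u)
  · simpa using (blockLowerLeft T).le_opNorm (x, 0)

theorem IsCompactOperator.blockLowerLeft {T : X →L[𝕜] Y} (hT : IsCompactOperator T) :
    IsCompactOperator (blockLowerLeft T) :=
  (hT.comp_clm (fst 𝕜 X Y)).clm_comp (inr 𝕜 X Y)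

theorem half_le_norm_fst_and_norm_snd_apply_eq {T₀ : X →L[𝕜] Y} (hT₀ : ‖T₀‖ = 1)
    {S : X × Y →L[𝕜] X × Y} (hd : ‖blockLowerLeft T₀ - S‖ ≤ 1 / 4) {u : X × Y} (hu : ‖u‖ = 1)
    (hSu : ‖S u‖ = ‖S‖) : 1 / 2 ≤ ‖u.1‖ ∧ ‖(S u).2‖ = ‖S‖ := by
  set d := ‖blockLowerLeft T₀ - S‖
  have hS : 3 / 4 ≤ ‖S‖ := by
    have := norm_sub_norm_le (blockLowerLeft T₀) S
    rw [norm_blockLowerLeft, hT₀] at this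
    linarith
  have hfst : ‖(S u).1‖ ≤ d :=
    calc ‖(S u).1‖ = ‖((blockLowerLeft T₀ - S) u).1‖ := by simp
      _ ≤ d := (_root_.norm_fst_le _).trans <| by
        simpa [hu] using (blockLowerLeft T₀ - S).le_opNorm u
  have hinr : ‖S (0, u.2)‖ ≤ d :=
    calc ‖S (0, u.2)‖ = ‖(blockLowerLeft T₀ - S) (0, u.2)‖ := by simp [Prod.mk_zero_zero]
      _ ≤ d * ‖((0 : X), u.2)‖ := le_opNorm _ _
      _ ≤ d := mul_le_of_le_one_right (norm_nonneg _) (by simpa [hu] using _root_.norm_snd_le u)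
  refine ⟨by nlinarith [norm_apply_le_opNorm_mul_norm_fst_add S u], ?_⟩
  rw [Prod.norm_def] at hSu
  exact ((max_eq_iff.1 hSu).resolve_left fun h ↦ by linarith [h.1]).1

theorem exists_normAttaining_norm_sub_le {T₀ : X →L[𝕜] Y} (hT₀ : ‖T₀‖ = 1)
    {S : X × Y →L[𝕜] X × Y} (hS : NormAttaining S) (hd : ‖blockLowerLeft T₀ - S‖ ≤ 1 / 4) :
    ∃ T : X →L[𝕜] Y, NormAttaining T ∧ ‖T₀ - T‖ ≤ 2 * ‖blockLowerLeft T₀ - S‖ := by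
  obtain ⟨u, hu, hSu⟩ := hS
  obtain ⟨hx, hsnd⟩ := half_le_norm_fst_and_norm_snd_apply_eq hT₀ hd hu hSu
  have hx₀ : u.1 ≠ 0 := norm_pos_iff.1 (by linarith)
  obtain ⟨L, hL_fst, hLu, hL⟩ := exists_section_fst_apply_eq 𝕜 hx₀ u.2
  rw [Prod.mk.eta] at hLu hL
  rw [hu] at hL
  have hL2 : ‖L‖ ≤ 2 := by nlinarith [norm_nonneg L]
  refine ⟨(snd 𝕜 X Y).comp (S.comp L), NormAttaining.of_opNorm_mul_le hx₀ ?_, ?_⟩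
  · calc _ ≤ ‖S‖ * ‖L‖ * ‖u.1‖ := by gcongr; exact norm_snd_comp_comp_le S L
      _ ≤ ‖S‖ := by nlinarith [norm_nonneg S]
      _ = _ := by simp [hLu, hsnd]
  · have hdiff : T₀ - (snd 𝕜 X Y).comp (S.comp L) =
        (snd 𝕜 X Y).comp ((blockLowerLeft T₀ - S).comp L) := by
      ext x; simp [hL_fst]
    calc ‖T₀ - (snd 𝕜 X Y).comp (S.comp L)‖ ≤ ‖blockLowerLeft T₀ - S‖ * ‖L‖ :=
          hdiff ▸ norm_snd_comp_comp_le _ L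
      _ ≤ 2 * ‖blockLowerLeft T₀ - S‖ := by rw [mul_comm]; gcongr

end BlockLowerLeft

theorem stmt_6_general
    (X : Type*) [NormedAddCommGroup X] [NormedSpace ℝ X]
    (Y : Type*) [NormedAddCommGroup Y] [NormedSpace ℝ Y]
    (T₀ : X →L[ℝ] Y) (hT₀c : IsCompactOperator T₀) (hT₀ : ‖T₀‖ = 1)
    (hT₀na : T₀ ∉ closure {T : X →L[ℝ] Y | ∃ x : X, ‖x‖ = 1 ∧ ‖T x‖ = ‖T‖})
    (S₀ : X × Y →L[ℝ] X × Y) (hS₀ : ∀ x : X, ∀ y : Y, S₀ (x, y) = (0, T₀ x)) :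
    IsCompactOperator S₀ ∧
      S₀ ∉ closure {S : X × Y →L[ℝ] X × Y | ∃ u : X × Y, ‖u‖ = 1 ∧ ‖S u‖ = ‖S‖} := by
  obtain rfl : S₀ = blockLowerLeft T₀ := ContinuousLinearMap.ext fun u ↦ hS₀ u.1 u.2
  refine ⟨hT₀c.blockLowerLeft, fun hS₀na ↦ hT₀na ?_⟩
  refine mem_closure_of_forall_dist_le (r := 1 / 4) (C := 2) (by norm_num) (fun S hS hd ↦ ?_) hS₀na
  rw [dist_eq_norm] at hd
  obtain ⟨T, hT, hT₀T⟩ := exists_normAttaining_norm_sub_le hT₀ hS hd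
  exact ⟨T, hT, by rwa [dist_eq_norm, dist_eq_norm]⟩

/-- If a compact operator `T₀ : X → Y` with `‖T₀‖ = 1` is not in the closure of
the norm-attaining operators, then the compact operator `S₀ : X ⊕∞ Y → X ⊕∞ Y`,
`S₀ (x, y) = (0, T₀ x)`, is not in the closure of the norm-attaining operators either. -/
theorem stmt_6
    (X : Type*) [NormedAddCommGroup X] [NormedSpace ℝ X] [CompleteSpace X]
    (Y : Type*) [NormedAddCommGroup Y] [NormedSpace ℝ Y] [CompleteSpace Y]
    (T₀ : X →L[ℝ] Y) (hT₀c : IsCompactOperator T₀) (hT₀ : ‖T₀‖ = 1)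
    (hT₀na : T₀ ∉ closure {T : X →L[ℝ] Y | ∃ x : X, ‖x‖ = 1 ∧ ‖T x‖ = ‖T‖})
    (S₀ : X × Y →L[ℝ] X × Y) (hS₀ : ∀ x : X, ∀ y : Y, S₀ (x, y) = (0, T₀ x)) :
    IsCompactOperator S₀ ∧
      S₀ ∉ closure {S : X × Y →L[ℝ] X × Y | ∃ u : X × Y, ‖u‖ = 1 ∧ ‖S u‖ = ‖S‖} :=
  stmt_6_general X Y T₀ hT₀c hT₀ hT₀na S₀ hS₀
end
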